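/- With $b = 22$, the coefficient of $t^4 q^2$ in Göttsche's series $\prod_{m=1}^{\infty} (1-t^{2m-2}q^m)^{-1}(1-t^{2m}q^m)^{-22}(1-t^{2m+2}q^m)^{-1}$ equals $276$, the coefficient of $t^4 q^3$ equals $299$, and the coefficient of $t^4 q^n$ equals $300$ for every $n \ge 4$. -/

import Mathlib

/-- The variable `t` in `ℚ[[t,q]]`. -/
noncomputable def tV : MvPowerSeries (Fin 2) ℚ := MvPowerSeries.X 0

/-- The variable `q` in `ℚ[[t,q]]`. -/
noncomputable def qV : MvPowerSeries (Fin 2) ℚ := MvPowerSeries.X 1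

/-- The infinite product `∏_{m=1}^∞ f m` of power series in `ℚ[[t,q]]`, each
factor being `1` plus terms of total degree `≥ m`: the coefficient at a
multidegree `d` is computed from the (stable) finite partial product over
`1 ≤ m ≤ |d|`. -/
noncomputable def iProd2 (f : ℕ → MvPowerSeries (Fin 2) ℚ) :
    MvPowerSeries (Fin 2) ℚ :=
  fun d => MvPowerSeries.coeff (R := ℚ) d (∏ m ∈ Finset.Icc 1 (d 0 + d 1), f m)

/-- Göttsche's series
`G(t,q) = ∏_{m=1}^∞ (1-t^{2m-2}q^m)^{-1}(1-t^{2m}q^m)^{-b}(1-t^{2m+2}q^m)^{-1}`. -/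
noncomputable def Gser (b : ℕ) : MvPowerSeries (Fin 2) ℚ :=
  iProd2 (fun m => (1 - tV ^ (2 * m - 2) * qV ^ m)⁻¹ *
    ((1 - tV ^ (2 * m) * qV ^ m)⁻¹) ^ b *
    (1 - tV ^ (2 * m + 2) * qV ^ m)⁻¹)

/- ======================= auxiliary machinery ======================= -/

abbrev PS := MvPowerSeries (Fin 2) ℚ

/-- `t`-high series: all coefficients at `t`-degree `≤ 4` vanish. -/
def Hi (f : PS) : Prop := ∀ e : Fin 2 →₀ ℕ, e 0 ≤ 4 → MvPowerSeries.coeff (R := ℚ) e f = 0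

lemma Hi.add {f g : PS} (hf : Hi f) (hg : Hi g) : Hi (f + g) := fun e he => by
  simp [map_add, hf e he, hg e he]

lemma Hi.mul_left (g : PS) {f : PS} (hf : Hi f) : Hi (g * f) := fun e he => by
  classical
  rw [MvPowerSeries.coeff_mul]
  apply Finset.sum_eq_zero
  rintro ⟨x, y⟩ hxy
  replace hxy : x + y = e := by simpa using hxy
  have hy : y 0 ≤ 4 := by
    have : x 0 + y 0 = e 0 := by rw [← hxy]; simp
    omega
  simp [hf y hy]

lemma Hi.mul_right {f : PS} (g : PS) (hf : Hi f) : Hi (f * g) := by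
  rw [mul_comm]; exact hf.mul_left g

lemma Hi.t_mul {a : ℕ} (ha : 5 ≤ a) (g : PS) : Hi (tV ^ a * g) := fun e he => by
  rw [tV, MvPowerSeries.X_pow_eq, MvPowerSeries.coeff_monomial_mul, if_neg]
  intro h
  have : a ≤ e 0 := by simpa using h 0
  omega

lemma Hi.zero : Hi 0 := fun e _ => by simp

/-- Equality of coefficients in `t`-degrees `≤ 4`. -/
def Req (f g : PS) : Prop := Hi (f - g)

lemma Req.refl (f : PS) : Req f f := by
  unfold Req; rw [sub_self]; exact Hi.zero

lemma Req.of_Hi {f g : PS} (h : Hi (f - g)) : Req f g := h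

lemma Req.trans {f g h : PS} (h1 : Req f g) (h2 : Req g h) : Req f h := by
  unfold Req at *
  have := h1.add h2
  simpa using this

lemma Req.coeff_eq {f g : PS} (h : Req f g) {e : Fin 2 →₀ ℕ} (he : e 0 ≤ 4) :
    MvPowerSeries.coeff (R := ℚ) e f = MvPowerSeries.coeff (R := ℚ) e g := by
  have := h e he
  rw [map_sub] at this
  linarith

lemma Req.mul {f g f' g' : PS} (hf : Req f f') (hg : Req g g') : Req (f * g) (f' * g') := by
  unfold Req at *
  have key : f * g - f' * g' = f * (g - g') + g' * (f - f') := by ring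
  rw [key]
  exact (hg.mul_left f).add (hf.mul_left g')

lemma Req.pow {f g : PS} (h : Req f g) (k : ℕ) : Req (f ^ k) (g ^ k) := by
  induction k with
  | zero => simpa using Req.refl 1
  | succ k ih => rw [pow_succ, pow_succ]; exact ih.mul h

lemma Req.congr_right {f g g' : PS} (h : Req f g) (h' : g = g') : Req f g' := h' ▸ h

lemma Req.prod_one {s : Finset ℕ} {f : ℕ → PS} (h : ∀ m ∈ s, Req (f m) 1) :
    Req (∏ m ∈ s, f m) 1 := by
  classical
  induction s using Finset.induction_on with
  | empty => simpa using Req.refl 1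
  | insert a s hnotmem ih =>
    rw [Finset.prod_insert hnotmem]
    have := (h a (by simp)).mul (ih fun m hm => h m (by simp [hm]))
    simpa using this

lemma constC (a b : ℕ) (h : 0 < a + b) :
    MvPowerSeries.constantCoeff (σ := Fin 2) (R := ℚ) (1 - tV ^ a * qV ^ b) ≠ 0 := by
  rw [map_sub, map_one, map_mul, map_pow, map_pow, tV, qV,
    MvPowerSeries.constantCoeff_X, MvPowerSeries.constantCoeff_X]
  have : (0:ℚ) ^ a * 0 ^ b = 0 := by
    rcases Nat.eq_zero_or_pos a with h0 | h0
    · have hb : 0 < b := by omega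
      simp [zero_pow hb.ne']
    · simp [zero_pow h0.ne']
  rw [this]; norm_num

lemma invA (a b : ℕ) (ha : 5 ≤ a) : Req ((1 - tV ^ a * qV ^ b)⁻¹) 1 := by
  have h1 := MvPowerSeries.mul_inv_cancel _ (constC a b (by omega))
  have key : (1 - tV ^ a * qV ^ b)⁻¹ - 1 = tV ^ a * (qV ^ b * (1 - tV ^ a * qV ^ b)⁻¹) := by
    linear_combination h1
  unfold Req; rw [key]; exact Hi.t_mul ha _

lemma inv_lin (b : ℕ) : Req ((1 - tV ^ 4 * qV ^ b)⁻¹) (1 + tV ^ 4 * qV ^ b) := by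
  have h1 := MvPowerSeries.mul_inv_cancel _ (constC 4 b (by omega))
  have key : (1 - tV ^ 4 * qV ^ b)⁻¹ - (1 + tV ^ 4 * qV ^ b) =
      tV ^ 8 * (qV ^ (2 * b) * (1 - tV ^ 4 * qV ^ b)⁻¹) := by
    linear_combination (1 + tV ^ 4 * qV ^ b) * h1
  unfold Req; rw [key]; exact Hi.t_mul (by omega) _

lemma inv_quad (b : ℕ) : Req ((1 - tV ^ 2 * qV ^ b)⁻¹)
    (1 + tV ^ 2 * qV ^ b + tV ^ 4 * qV ^ (2 * b)) := by
  have h1 := MvPowerSeries.mul_inv_cancel _ (constC 2 b (by omega))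
  have key : (1 - tV ^ 2 * qV ^ b)⁻¹ - (1 + tV ^ 2 * qV ^ b + tV ^ 4 * qV ^ (2 * b)) =
      tV ^ 6 * (qV ^ (3 * b) * (1 - tV ^ 2 * qV ^ b)⁻¹) := by
    linear_combination (1 + tV ^ 2 * qV ^ b + tV ^ 4 * qV ^ (2 * b)) * h1
  unfold Req; rw [key]; exact Hi.t_mul (by omega) _

lemma pow_lin (v : PS) (hv : Hi (v * v)) (k : ℕ) :
    Req ((1 + v) ^ k) (1 + (k : PS) * v) := by
  induction k with
  | zero => simpa using Req.refl 1
  | succ k ih =>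
    rw [pow_succ]
    refine (ih.mul (Req.refl (1 + v))).trans (Req.of_Hi ?_)
    have key : (1 + (k : PS) * v) * (1 + v) - (1 + ((k+1 : ℕ) : PS) * v)
        = (v * v) * (k : PS) := by push_cast; ring
    rw [key]
    exact hv.mul_right _

lemma pow_quad (u : PS) (hu : Hi (u * u * u)) (k : ℕ) :
    Req ((1 + u + u * u) ^ k) (1 + (k : PS) * u + ((k.choose 2 + k : ℕ) : PS) * (u * u)) := by
  induction k with
  | zero => simpa using Req.refl 1
  | succ k ih =>
    rw [pow_succ]
    refine (ih.mul (Req.refl (1 + u + u * u))).trans (Req.of_Hi ?_)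
    have hc : ((k+1).choose 2 + (k+1) : ℕ) = (k.choose 2 + k) + (k + 1) := by
      simp [Nat.choose_succ_succ, Nat.choose_one_right, Nat.succ_eq_add_one]; omega
    have key : (1 + (k : PS) * u + ((k.choose 2 + k : ℕ) : PS) * (u * u)) * (1 + u + u * u)
        - (1 + ((k+1 : ℕ) : PS) * u + (((k+1).choose 2 + (k+1) : ℕ) : PS) * (u * u))
        = (u * u * u) * (((k : PS) + ((k.choose 2 + k : ℕ) : PS))
            + ((k.choose 2 + k : ℕ) : PS) * u) := by
      rw [hc]; push_cast; ring
    rw [key]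
    exact hu.mul_right _

/- ======================= the geometric series in q ======================= -/

noncomputable def geo : PS := fun e => if e 0 = 0 then 1 else 0

lemma coeff_geo (e : Fin 2 →₀ ℕ) : MvPowerSeries.coeff (R := ℚ) e geo = if e 0 = 0 then 1 else 0 :=
  rfl

lemma eq_zero_iff (e : Fin 2 →₀ ℕ) : e = 0 ↔ e 0 = 0 ∧ e 1 = 0 := by
  constructor
  · rintro rfl; simp
  · rintro ⟨h0, h1⟩
    ext i
    match i with
    | 0 => simpa using h0
    | 1 => simpa using h1

lemma geo_mul : (1 - qV) * geo = 1 := by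
  ext e
  rw [sub_mul, one_mul, map_sub, coeff_geo, qV, MvPowerSeries.X,
    MvPowerSeries.coeff_monomial_mul, MvPowerSeries.coeff_one]
  by_cases h1 : Finsupp.single (1 : Fin 2) 1 ≤ e
  · have he1 : 1 ≤ e 1 := by simpa using h1 1
    rw [if_pos h1]
    have hsub : ((e - Finsupp.single (1 : Fin 2) (1:ℕ)) : Fin 2 →₀ ℕ) 0 = e 0 := by
      rw [Finsupp.tsub_apply]; simp
    rw [coeff_geo, hsub]
    have hne : ¬ e = 0 := by
      rw [eq_zero_iff]; omega
    rw [if_neg hne]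
    ring
  · have he1 : ¬ 1 ≤ e 1 := by
      intro h
      exact h1 (by
        intro i
        match i with
        | 0 => simp
        | 1 => simpa using h)
    rw [if_neg h1]
    by_cases h0 : e 0 = 0
    · rw [if_pos h0, if_pos (by rw [eq_zero_iff]; omega)]; ring
    · rw [if_neg h0, if_neg (by rw [eq_zero_iff]; omega)]; ring

lemma geo_inv : (1 - qV)⁻¹ = geo := by
  rw [MvPowerSeries.inv_eq_iff_mul_eq_one, mul_comm]
  · exact geo_mul
  · rw [map_sub, map_one, qV, MvPowerSeries.constantCoeff_X]; norm_num

/- ======================= monomials and their coefficients ======================= -/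

noncomputable def mono (a b c : ℕ) : PS :=
  MvPowerSeries.monomial (R := ℚ) (Finsupp.single 0 a + Finsupp.single 1 b) (c : ℚ)

lemma mono_eq (a b c : ℕ) : mono a b c = (c : PS) * tV ^ a * qV ^ b := by
  rw [mono, tV, qV, MvPowerSeries.X_pow_eq, MvPowerSeries.X_pow_eq,
    ← map_natCast (MvPowerSeries.C (σ := Fin 2) (R := ℚ)) c, ← MvPowerSeries.monomial_zero_eq_C_apply,
    MvPowerSeries.monomial_mul_monomial, MvPowerSeries.monomial_mul_monomial]
  simp

lemma ele (a b n : ℕ) :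
    (Finsupp.single (0:Fin 2) a + Finsupp.single 1 b ≤ Finsupp.single 0 4 + Finsupp.single 1 n)
      ↔ a ≤ 4 ∧ b ≤ n := by
  constructor
  · intro h
    exact ⟨by simpa using h 0, by simpa using h 1⟩
  · rintro ⟨h1, h2⟩ i
    match i with
    | 0 => simpa using h1
    | 1 => simpa using h2

lemma key (n a b c : ℕ) :
    MvPowerSeries.coeff (R := ℚ) (Finsupp.single 0 4 + Finsupp.single 1 n) (geo * mono a b c)
      = if a = 4 ∧ b ≤ n then (c : ℚ) else 0 := by
  rw [mono, MvPowerSeries.coeff_mul_monomial]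
  by_cases h : Finsupp.single (0:Fin 2) a + Finsupp.single 1 b ≤
      Finsupp.single 0 4 + Finsupp.single 1 n
  · rw [if_pos h, coeff_geo]
    obtain ⟨ha, hb⟩ := (ele a b n).mp h
    have hsub : ((Finsupp.single (0:Fin 2) 4 + Finsupp.single 1 n -
        (Finsupp.single 0 a + Finsupp.single 1 b)) : Fin 2 →₀ ℕ) 0 = 4 - a := by
      rw [Finsupp.tsub_apply]; simp
    rw [hsub]
    by_cases h4 : a = 4
    · rw [if_pos (by omega), if_pos ⟨h4, hb⟩]; ring
    · rw [if_neg (by omega), if_neg (by tauto)]; ring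
  · rw [if_neg h, if_neg]
    intro ⟨h4, hb⟩
    exact h ((ele a b n).mpr ⟨by omega, hb⟩)

/- ======================= the truncated product ======================= -/

noncomputable def fct (m : ℕ) : PS :=
  (1 - tV ^ (2 * m - 2) * qV ^ m)⁻¹ *
    ((1 - tV ^ (2 * m) * qV ^ m)⁻¹) ^ 22 *
    (1 - tV ^ (2 * m + 2) * qV ^ m)⁻¹

lemma tail_one (m : ℕ) (hm : 4 ≤ m) : Req (fct m) 1 := by
  have h1 := invA (2 * m - 2) m (by omega)
  have h2 := invA (2 * m) m (by omega)
  have h3 := invA (2 * m + 2) m (by omega)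
  have := (h1.mul (h2.pow 22)).mul h3
  simpa [fct] using this

noncomputable def MM : PS :=
  mono 0 0 1 +
  mono 2 1 22 +
  mono 2 2 1 +
  mono 4 1 1 +
  mono 4 2 275 +
  mono 4 3 23 +
  mono 4 4 1 +
  mono 6 2 22 +
  mono 6 3 485 +
  mono 6 4 297 +
  mono 6 5 23 +
  mono 8 3 275 +
  mono 8 4 5589 +
  mono 8 5 760 +
  mono 8 6 297 +
  mono 8 7 1 +
  mono 10 4 484 +
  mono 10 5 297 +
  mono 10 6 6073 +
  mono 10 7 759 +
  mono 10 8 22 +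
  mono 12 5 5566 +
  mono 12 6 759 +
  mono 12 7 5863 +
  mono 12 8 6051 +
  mono 12 9 275 +
  mono 14 7 6050 +
  mono 14 8 759 +
  mono 14 9 5588 +
  mono 14 10 484 +
  mono 16 8 5566 +
  mono 16 9 6050 +
  mono 16 10 275 +
  mono 16 11 5566 +
  mono 18 10 5566 +
  mono 18 11 484 +
  mono 20 12 5566

lemma head_req : Req (fct 1 * fct 2 * fct 3) (geo * MM) := by
  -- the six truncation facts
  have hu1 : Hi ((tV^2*qV^1) * (tV^2*qV^1) * (tV^2*qV^1)) := by
    have e : (tV^2*qV^1) * (tV^2*qV^1) * (tV^2*qV^1) = tV ^ 6 * qV ^ 3 := by ring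
    rw [e]; exact Hi.t_mul (by omega) _
  have hu2 : Hi ((tV^2*qV^2) * (tV^2*qV^2) * (tV^2*qV^2)) := by
    have e : (tV^2*qV^2) * (tV^2*qV^2) * (tV^2*qV^2) = tV ^ 6 * qV ^ 6 := by ring
    rw [e]; exact Hi.t_mul (by omega) _
  have hv : Hi ((tV^4*qV^2) * (tV^4*qV^2)) := by
    have e : (tV^4*qV^2) * (tV^4*qV^2) = tV ^ 8 * qV ^ 4 := by ring
    rw [e]; exact Hi.t_mul (by omega) _
  -- factor m = 1
  have e1 : fct 1 = (1 - qV)⁻¹ * ((1 - tV^2*qV^1)⁻¹) ^ 22 * (1 - tV^4*qV^1)⁻¹ := by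
    norm_num [fct]
  have c22 : ((22:ℕ) : PS) = 22 := by norm_num
  have c253 : (((22:ℕ).choose 2 + 22 : ℕ) : PS) = 253 := by
    rw [show ((22:ℕ).choose 2 + 22 : ℕ) = 253 from by decide]
    norm_num
  have q1a : Req ((1 - tV^2*qV^1)⁻¹)
      (1 + (tV^2*qV^1) + (tV^2*qV^1) * (tV^2*qV^1)) := by
    have h := inv_quad 1
    have e : (1 : PS) + tV^2*qV^1 + tV^4*qV^(2*1)
        = 1 + (tV^2*qV^1) + (tV^2*qV^1) * (tV^2*qV^1) := by ring
    rw [e] at h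
    exact h
  have q1 : Req (((1 - tV^2*qV^1)⁻¹) ^ 22)
      (1 + 22 * (tV^2*qV^1) + 253 * ((tV^2*qV^1) * (tV^2*qV^1))) := by
    refine (q1a.pow 22).trans ?_
    have h := pow_quad (tV^2*qV^1) hu1 22
    rw [c22, c253] at h
    exact h
  have q2 : Req ((1 - tV^4*qV^1)⁻¹) (1 + tV^4*qV^1) := inv_lin 1
  have H1 : Req (fct 1) (geo * (1 + 22 * (tV^2*qV^1) + 253 * ((tV^2*qV^1) * (tV^2*qV^1)))
      * (1 + tV^4*qV^1)) := by
    rw [e1, geo_inv]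
    exact ((Req.refl geo).mul q1).mul q2
  -- factor m = 2
  have e2 : fct 2 = (1 - tV^2*qV^2)⁻¹ * ((1 - tV^4*qV^2)⁻¹) ^ 22 * (1 - tV^6*qV^2)⁻¹ := by
    norm_num [fct]
  have q3 : Req ((1 - tV^2*qV^2)⁻¹)
      (1 + tV^2*qV^2 + (tV^2*qV^2) * (tV^2*qV^2)) := by
    have h := inv_quad 2
    have e : (1 : PS) + tV^2*qV^2 + tV^4*qV^(2*2)
        = 1 + tV^2*qV^2 + (tV^2*qV^2) * (tV^2*qV^2) := by ring
    rw [e] at h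
    exact h
  have q4 : Req (((1 - tV^4*qV^2)⁻¹) ^ 22) (1 + 22 * (tV^4*qV^2)) := by
    refine ((inv_lin 2).pow 22).trans ?_
    have h := pow_lin (tV^4*qV^2) hv 22
    rw [c22] at h
    exact h
  have H2 : Req (fct 2) ((1 + tV^2*qV^2 + (tV^2*qV^2) * (tV^2*qV^2))
      * (1 + 22 * (tV^4*qV^2))) := by
    rw [e2]
    exact (((q3.mul q4).mul (invA 6 2 (by omega))).congr_right (mul_one _))
  -- factor m = 3
  have e3 : fct 3 = (1 - tV^4*qV^3)⁻¹ * ((1 - tV^6*qV^3)⁻¹) ^ 22 * (1 - tV^8*qV^3)⁻¹ := by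
    norm_num [fct]
  have q5 : Req (((1 - tV^6*qV^3)⁻¹) ^ 22) 1 := by
    have h := (invA 6 3 (by omega)).pow 22
    rw [one_pow] at h
    exact h
  have H3 : Req (fct 3) (1 + tV^4*qV^3) := by
    rw [e3]
    refine (((inv_lin 3).mul q5).mul (invA 8 3 (by omega))).congr_right ?_
    ring
  refine ((H1.mul H2).mul H3).congr_right ?_
  rw [MM]
  simp only [mono_eq]
  push_cast
  ring

lemma main (n : ℕ) (hn : 2 ≤ n) :
    MvPowerSeries.coeff (R := ℚ) (Finsupp.single 0 4 + Finsupp.single 1 n) (Gser 22)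
      = 276 + (if 3 ≤ n then (23:ℚ) else 0) + (if 4 ≤ n then (1:ℚ) else 0) := by
  have hd : ((Finsupp.single (0:Fin 2) 4 + Finsupp.single 1 n) : Fin 2 →₀ ℕ) 0
      + ((Finsupp.single (0:Fin 2) 4 + Finsupp.single 1 n) : Fin 2 →₀ ℕ) 1 = 4 + n := by
    simp
  have hG : MvPowerSeries.coeff (R := ℚ) (Finsupp.single 0 4 + Finsupp.single 1 n) (Gser 22)
      = MvPowerSeries.coeff (R := ℚ) (Finsupp.single 0 4 + Finsupp.single 1 n)
        (∏ m ∈ Finset.Icc 1 (4 + n), fct m) := by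
    rw [show Gser 22 = iProd2 fct from rfl, MvPowerSeries.coeff_apply, iProd2]
    rw [hd]
  rw [hG]
  -- split the product
  have hsplit : (∏ m ∈ Finset.Icc 1 (4 + n), fct m)
      = (∏ m ∈ Finset.Icc 1 3, fct m) * ∏ m ∈ Finset.Ioc 3 (4 + n), fct m := by
    rw [show Finset.Icc 1 (4 + n) = Finset.Ioc 0 (4 + n) from rfl,
      show Finset.Icc 1 3 = Finset.Ioc 0 3 from rfl]
    exact (Finset.prod_Ioc_consecutive fct (by omega) (by omega)).symm
  have hprod3 : (∏ m ∈ Finset.Icc 1 3, fct m) = fct 1 * fct 2 * fct 3 := by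
    rw [show Finset.Icc 1 3 = ({1, 2, 3} : Finset ℕ) from by decide,
      Finset.prod_insert (by decide), Finset.prod_insert (by decide),
      Finset.prod_singleton, mul_assoc]
  have htail : Req (∏ m ∈ Finset.Ioc 3 (4 + n), fct m) 1 :=
    Req.prod_one fun m hm => tail_one m (by
      rw [Finset.mem_Ioc] at hm; omega)
  have hreq : Req (∏ m ∈ Finset.Icc 1 (4 + n), fct m) (geo * MM) := by
    rw [hsplit, hprod3]
    exact ((head_req.mul htail).congr_right (mul_one _))
  rw [hreq.coeff_eq (by simp)]
  have hb1 : 1 ≤ n := by omega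
  have hb2 : 2 ≤ n := hn
  rw [MM]
  simp only [mul_add, map_add, key]
  norm_num [hb1, hb2]


/-- For `b = 22`, the coefficient of `t⁴q²` in Göttsche's series is `276`,
that of `t⁴q³` is `299`, and that of `t⁴qⁿ` is `300` for all `n ≥ 4`. -/
theorem stmt7 :
    MvPowerSeries.coeff (R := ℚ) (Finsupp.single 0 4 + Finsupp.single 1 2) (Gser 22)
        = 276 ∧
    MvPowerSeries.coeff (R := ℚ) (Finsupp.single 0 4 + Finsupp.single 1 3) (Gser 22)
        = 299 ∧
    ∀ n : ℕ, 4 ≤ n →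
      MvPowerSeries.coeff (R := ℚ) (Finsupp.single 0 4 + Finsupp.single 1 n)
        (Gser 22) = 300 := by
  refine ⟨?_, ?_, ?_⟩
  · rw [main 2 (by omega)]; norm_num
  · rw [main 3 (by omega)]; norm_num
  · intro n hn
    rw [main n (by omega)]
    rw [if_pos (by omega), if_pos (by omega)]
    norm_num
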